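/- If γ, λ, e, δ are real numbers with 0 < γ, γ < λ < 1/γ − 2, e ≥ 0, δ ≥ 0, and (1/2)e² + δ² ≤ γ(√2·e·δ + e²), then e = 0 and δ = 0. -/
import Mathlib


theorem uniqueness_quadratic_ineq (γ lam e δ : ℝ) (hγ : 0 < γ)
    (h1 : γ < lam) (h2 : lam < 1 / γ - 2) (he : 0 ≤ e) (hδ : 0 ≤ δ)
    (hineq : (1 / 2) * e ^ 2 + δ ^ 2 ≤ γ * (Real.sqrt 2 * e * δ + e ^ 2)) :
    e = 0 ∧ δ = 0 := by
  have hlam : 0 < lam := hγ.trans h1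
  have hs : Real.sqrt 2 ^ 2 = 2 := Real.sq_sqrt (by norm_num)
  have hγl : γ * lam < 1 - 2 * γ := by
    have := mul_lt_mul_of_pos_left h2 hγ
    rw [mul_sub, mul_one_div, div_self hγ.ne'] at this
    linarith
  -- Young's inequality: √2 e δ ≤ (lam/2) e² + (1/lam) δ² (multiplied by lam)
  have hyoung : Real.sqrt 2 * e * δ * lam ≤ (lam ^ 2 / 2) * e ^ 2 + δ ^ 2 := by
    nlinarith [sq_nonneg (lam * e - Real.sqrt 2 * δ)]
  have hmul := mul_le_mul_of_nonneg_right hineq hlam.le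
  have hγlam : γ < lam := h1
  have hA : 0 < lam * (1 - 2 * γ - γ * lam) := mul_pos hlam (by linarith)
  have hB : 0 < lam - γ := by linarith
  have hcomb : lam * (1 - 2 * γ - γ * lam) / 2 * e ^ 2 + (lam - γ) * δ ^ 2 ≤ 0 := by
    nlinarith [mul_le_mul_of_nonneg_left hyoung hγ.le, hmul]
  have he2 : e ^ 2 ≤ 0 := by
    nlinarith [mul_nonneg hB.le (sq_nonneg δ), sq_nonneg e]
  have hd2 : δ ^ 2 ≤ 0 := by
    nlinarith [mul_nonneg hA.le (sq_nonneg e), sq_nonneg δ]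
  constructor
  · exact pow_eq_zero_iff (n := 2) (by norm_num) |>.mp (le_antisymm he2 (sq_nonneg e))
  · exact pow_eq_zero_iff (n := 2) (by norm_num) |>.mp (le_antisymm hd2 (sq_nonneg δ))
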